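/- Let A be a finite-dimensional algebra over an algebraically closed field F, and let M be an indecomposable A-module with Rad^2(M) = 0 and Rad(M) ≠ 0. Then for every simple composition factor T of M/Rad(M) there exists a composition factor T' of Rad(M) such that Ext^1_A(T, T') ≠ 0. -/

import Mathlib

open CategoryTheory

noncomputable section

/-- The (Jacobson) radical of a module: the intersection of all maximal submodules. -/
def moduleRad (A : Type) [Ring A] (M : Type) [AddCommGroup M] [Module A M] : Submodule A M :=
  sInf {N : Submodule A M | IsCoatom N}

/-- `T` is a composition factor of `M`: `T` is simple and isomorphic to a subquotient
`N ⧸ N'` for submodules `N' ≤ N` of `M`. -/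
def IsCompositionFactor (A : Type) [Ring A] (T : Type) [AddCommGroup T] [Module A T]
    (M : Type) [AddCommGroup M] [Module A M] : Prop :=
  IsSimpleModule A T ∧
    ∃ N N' : Submodule A M, N' ≤ N ∧
      Nonempty ((↥N ⧸ (Submodule.comap N.subtype N')) ≃ₗ[A] T)

/-- A module is indecomposable if it is nonzero and admits no nontrivial direct sum
decomposition. -/
def IsIndecomposableModule (A : Type) [Ring A] (M : Type) [AddCommGroup M] [Module A M] : Prop :=
  Nontrivial M ∧ ∀ X Y : Submodule A M, IsCompl X Y → X = ⊥ ∨ Y = ⊥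

/-- `Ext¹_A(T,T') ≠ 0`, via the derived-functor `Ext` of the abelian category of `A`-modules,
with its `F`-linear structure. -/
def ext1NeZero (F : Type) [Field F] (A : Type) [Ring A] [Algebra F A]
    (T : Type) [AddCommGroup T] [Module A T] (T' : Type) [AddCommGroup T'] [Module A T'] : Prop :=
  Nontrivial (((Ext F (ModuleCat A) 1).obj (Opposite.op (ModuleCat.of A T))).obj (ModuleCat.of A T'))

namespace Stmt0Aux

variable {A : Type} [Ring A]

/-- Retraction predicate: the inclusion of `Y` into `E` admits a linear retraction. -/
def Retr (A : Type) [Ring A] (E : Type) [AddCommGroup E] [Module A E]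
    (Y : Submodule A E) : Prop :=
  ∃ r : E →ₗ[A] Y, ∀ y : Y, r (y : E) = y

section Transfer

variable {E₁ E₂ : Type} [AddCommGroup E₁] [Module A E₁] [AddCommGroup E₂] [Module A E₂]

theorem retr_transfer (e : E₁ ≃ₗ[A] E₂) {Y₁ : Submodule A E₁} {Y₂ : Submodule A E₂}
    (h : Y₁.map (e : E₁ →ₗ[A] E₂) = Y₂) (hr : Retr A E₂ Y₂) : Retr A E₁ Y₁ := by
  obtain ⟨r₂, hr₂⟩ := hr
  have hmem : ∀ x : E₁, (e.symm.toLinearMap.comp ((Y₂.subtype.comp r₂).comp e.toLinearMap)) x ∈ Y₁ := by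
    intro x
    have h2 : ((r₂ (e x) : E₂)) ∈ Y₁.map (e : E₁ →ₗ[A] E₂) := by
      rw [h]; exact (r₂ (e x)).2
    obtain ⟨y, hy, hy2⟩ := h2
    simpa [← hy2] using hy
  refine ⟨LinearMap.codRestrict Y₁ _ hmem, ?_⟩
  intro y
  apply Subtype.ext
  have hmemY₂ : e (y : E₁) ∈ Y₂ := by rw [← h]; exact ⟨y, y.2, rfl⟩
  have := hr₂ ⟨e (y : E₁), hmemY₂⟩
  simp only [LinearMap.codRestrict_apply, LinearMap.coe_comp, Function.comp_apply,
    LinearEquiv.coe_coe, Submodule.coe_subtype]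
  rw [this]
  exact e.symm_apply_apply _

end Transfer

theorem retr_of_bot {E : Type} [AddCommGroup E] [Module A E] {Y : Submodule A E}
    (h : Y = ⊥) : Retr A E Y := by
  refine ⟨0, fun y => ?_⟩
  apply Subtype.ext
  have : (y : E) ∈ (⊥ : Submodule A E) := h ▸ y.2
  simpa using this.symm

/-- Combine retractions along two complementary pushouts. -/
theorem retr_combine {E : Type} [AddCommGroup E] [Module A E]
    {Y V V' : Submodule A E} (hVY : V ≤ Y) (hV'Y : V' ≤ Y)
    (hinf : V ⊓ V' = ⊥) (hsup : V ⊔ V' = Y)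
    (h1 : Retr A (E ⧸ V) (Y.map V.mkQ)) (h2 : Retr A (E ⧸ V') (Y.map V'.mkQ)) :
    Retr A E Y := by
  obtain ⟨r1, hr1⟩ := h1
  obtain ⟨r2, hr2⟩ := h2
  -- the CRT map j : Y → Y/V × Y/V'
  have hm1 : ∀ y : Y, V.mkQ (y : E) ∈ Y.map V.mkQ := fun y => ⟨y, y.2, rfl⟩
  have hm2 : ∀ y : Y, V'.mkQ (y : E) ∈ Y.map V'.mkQ := fun y => ⟨y, y.2, rfl⟩
  let j1 : Y →ₗ[A] (Y.map V.mkQ) :=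
    LinearMap.codRestrict _ (V.mkQ.comp Y.subtype) hm1
  let j2 : Y →ₗ[A] (Y.map V'.mkQ) :=
    LinearMap.codRestrict _ (V'.mkQ.comp Y.subtype) hm2
  let j : Y →ₗ[A] (Y.map V.mkQ) × (Y.map V'.mkQ) := LinearMap.prod j1 j2
  have hinj : Function.Injective j := by
    intro a b hab
    have h1' : Submodule.Quotient.mk (p := V) (a : E) = Submodule.Quotient.mk (b : E) := by
      have := congrArg (fun z => ((Prod.fst z : Y.map V.mkQ) : E ⧸ V)) hab
      exact this
    have h2' : Submodule.Quotient.mk (p := V') (a : E) = Submodule.Quotient.mk (b : E) := by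
      have := congrArg (fun z => ((Prod.snd z : Y.map V'.mkQ) : E ⧸ V')) hab
      exact this
    have hV : (a : E) - b ∈ V := (Submodule.Quotient.eq V).mp h1'
    have hV' : (a : E) - b ∈ V' := (Submodule.Quotient.eq V').mp h2'
    have : (a : E) - b ∈ V ⊓ V' := ⟨hV, hV'⟩
    rw [hinf] at this
    exact Subtype.ext (by simpa [sub_eq_zero] using this)
  have hsurj : Function.Surjective j := by
    rintro ⟨⟨a, ha⟩, ⟨b, hb⟩⟩
    obtain ⟨ya, hya, hya2⟩ := ha
    obtain ⟨yb, hyb, hyb2⟩ := hb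
    have hmemY : ya - yb ∈ V ⊔ V' := by rw [hsup]; exact sub_mem hya hyb
    obtain ⟨v, hv, v', hv', hvv'⟩ := Submodule.mem_sup.mp hmemY
    refine ⟨⟨ya - v, sub_mem hya (hVY hv)⟩, ?_⟩
    have e1 : V.mkQ (ya - v) = V.mkQ ya := by
      rw [map_sub]
      simp [(Submodule.Quotient.mk_eq_zero V).mpr hv, Submodule.mkQ_apply]
    have e2 : V'.mkQ (ya - v) = V'.mkQ yb := by
      have hyv : ya - v = yb + v' := by
        have h' := hvv'
        have : ya = v + v' + yb := by rw [h']; abel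
        rw [this]; abel
      rw [hyv, map_add]
      simp [Submodule.mkQ_apply, (Submodule.Quotient.mk_eq_zero V').mpr hv']
    have e1' : V.mkQ (ya - v) = a := e1.trans hya2
    have e2' : V'.mkQ (ya - v) = b := e2.trans hyb2
    refine Prod.ext (Subtype.ext ?_) (Subtype.ext ?_)
    · exact e1'
    · exact e2'
  let jE := LinearEquiv.ofBijective j ⟨hinj, hsurj⟩
  let pr : E →ₗ[A] (Y.map V.mkQ) × (Y.map V'.mkQ) :=
    LinearMap.prod (r1.comp V.mkQ) (r2.comp V'.mkQ)
  refine ⟨(jE.symm : _ →ₗ[A] _).comp pr, fun y => ?_⟩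
  apply jE.injective
  have happ : jE ((jE.symm : _ →ₗ[A] _).comp pr (y : E)) = pr (y : E) := by
    simp [jE]
  rw [happ]
  have hj : jE y = j y := rfl
  rw [hj]
  refine Prod.ext ?_ ?_
  · have := hr1 ⟨V.mkQ (y : E), hm1 y⟩
    exact this
  · have := hr2 ⟨V'.mkQ (y : E), hm2 y⟩
    exact this




/-- An Artinian module with zero radical is semisimple. -/
theorem semisimple_of_rad_bot (E : Type) [AddCommGroup E] [Module A E] [IsArtinian A E]
    (h : sInf {N : Submodule A E | IsCoatom N} = ⊥) : IsSemisimpleModule A E := by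
  rw [isSemisimpleModule_iff]; constructor
  intro p
  obtain ⟨q, hq𝒮, hqmin⟩ := IsArtinian.set_has_minimal
    {q : Submodule A E | p ⊔ q = ⊤} ⟨⊤, by simp⟩
  refine ⟨q, ?_, ?_⟩
  · -- disjoint
    rw [disjoint_iff]
    by_contra hne
    obtain ⟨x, hx, hx0⟩ := Submodule.exists_mem_ne_zero_of_ne_bot hne
    have hxrad : x ∉ sInf {N : Submodule A E | IsCoatom N} := by
      rw [h]; simpa using hx0
    obtain ⟨N, hN, hxN⟩ : ∃ N, IsCoatom N ∧ x ∉ N := by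
      by_contra hc
      push_neg at hc
      exact hxrad (Submodule.mem_sInf.mpr fun N hN => hc N hN)
    have hNtop : N ⊔ Submodule.span A {x} = ⊤ := by
      refine hN.2 _ (lt_of_le_of_ne le_sup_left ?_)
      intro heq
      refine hxN ?_
      rw [heq]
      exact le_sup_right (a := N) (Submodule.mem_span_singleton_self x)
    have hq' : p ⊔ (q ⊓ N) = ⊤ := by
      rw [eq_top_iff]
      intro m _
      have hm : m ∈ p ⊔ q := hq𝒮 ▸ Submodule.mem_top
      obtain ⟨p₁, hp₁, q₁, hq₁, hpq⟩ := Submodule.mem_sup.mp hm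
      have hq₁' : q₁ ∈ N ⊔ Submodule.span A {x} := hNtop ▸ Submodule.mem_top
      obtain ⟨n, hn, ax, hax, hnax⟩ := Submodule.mem_sup.mp hq₁'
      obtain ⟨a, rfl⟩ := Submodule.mem_span_singleton.mp hax
      have hnq : n ∈ q ⊓ N := by
        refine ⟨?_, hn⟩
        have : n = q₁ - a • x := by rw [← hnax]; abel
        rw [this]
        exact sub_mem hq₁ (Submodule.smul_mem q a hx.2)
      have : m = (p₁ + a • x) + n := by rw [← hpq, ← hnax]; abel
      rw [this]
      exact Submodule.add_mem_sup (add_mem hp₁ (Submodule.smul_mem p a hx.1)) hnq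
    have hlt : q ⊓ N < q := by
      refine lt_of_le_of_ne inf_le_left ?_
      intro heq
      have hxqN : x ∈ q ⊓ N := by rw [heq]; exact hx.2
      exact hxN hxqN.2
    exact hqmin (q ⊓ N) hq' hlt
  · rw [codisjoint_iff]; exact hq𝒮

/-- The radical of `M ⧸ moduleRad A M` is zero. -/
theorem rad_quot_bot (M : Type) [AddCommGroup M] [Module A M] :
    sInf {N : Submodule A (M ⧸ sInf {N : Submodule A M | IsCoatom N}) | IsCoatom N} = ⊥ := by
  set R := sInf {N : Submodule A M | IsCoatom N} with hR
  rw [eq_bot_iff]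
  rintro xq hxq
  obtain ⟨x, rfl⟩ := R.mkQ_surjective xq
  have hx : x ∈ R := by
    rw [hR]
    refine Submodule.mem_sInf.mpr fun N hN => ?_
    have hRN : R ≤ N := sInf_le hN
    have hco : IsCoatom (N.map R.mkQ) := by
      constructor
      · intro htop
        have : Submodule.comap R.mkQ (N.map R.mkQ) = ⊤ := by rw [htop]; simp
        rw [Submodule.comap_map_mkQ, sup_eq_right.mpr hRN] at this
        exact hN.1 this
      · intro B hB
        have hcm : N ≤ Submodule.comap R.mkQ B := by
          refine le_trans ?_ (Submodule.comap_mono hB.le)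
          rw [Submodule.comap_map_mkQ]; exact le_sup_right
        have hlt : N < Submodule.comap R.mkQ B := by
          refine lt_of_le_of_ne hcm ?_
          intro heq
          have : B = N.map R.mkQ := by
            rw [heq]
            exact (Submodule.map_comap_eq_self (by simp [Submodule.range_mkQ])).symm
          exact absurd this.symm hB.ne
        have := hN.2 _ hlt
        have hB' : B = ⊤ := by
          have h1 : Submodule.map R.mkQ (Submodule.comap R.mkQ B) = B :=
            Submodule.map_comap_eq_self (by simp [Submodule.range_mkQ])
          rw [← h1, this, Submodule.map_top, Submodule.range_mkQ]
        exact hB'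
    have hmem : R.mkQ x ∈ N.map R.mkQ := Submodule.mem_sInf.mp hxq _ hco
    obtain ⟨n, hn, hnx⟩ := hmem
    have : x - n ∈ R := by
      have hq : Submodule.Quotient.mk (p := R) x = Submodule.Quotient.mk n := by
        simpa [Submodule.mkQ_apply] using hnx.symm
      exact (Submodule.Quotient.eq R).mp hq
    have : x - n ∈ N := hRN this
    simpa using add_mem this hn
  simpa [Submodule.mem_bot, Submodule.Quotient.mk_eq_zero] using hx


/-- Generic subquotient isomorphism along a linear map. -/
def subquotEquiv {M M₂ : Type} [AddCommGroup M] [Module A M] [AddCommGroup M₂] [Module A M₂]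
    (φ : M →ₗ[A] M₂) (D' : Submodule A M) (S' : Submodule A M₂) (K : Submodule A M)
    (h1 : ∀ x ∈ D', φ x ∈ S') (h2 : ∀ s ∈ S', ∃ x ∈ D', φ x = s)
    (hK : ∀ x : M, φ x = 0 ↔ x ∈ K) :
    ((↥D') ⧸ (Submodule.comap D'.subtype K)) ≃ₗ[A] ↥S' := by
  let f : ↥D' →ₗ[A] ↥S' :=
    LinearMap.codRestrict S' (φ.comp D'.subtype) (fun x => h1 _ x.2)
  have hker : Submodule.comap D'.subtype K = LinearMap.ker f := by
    ext x
    simp only [Submodule.mem_comap, LinearMap.mem_ker, f]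
    constructor
    · intro hx
      apply Subtype.ext
      simpa [LinearMap.codRestrict_apply] using (hK _).mpr hx
    · intro hx
      have := congrArg (fun z : ↥S' => (z : M₂)) hx
      simpa [LinearMap.codRestrict_apply, hK] using this
  have hsurj : Function.Surjective f := by
    rintro ⟨s, hs⟩
    obtain ⟨x, hx, hxs⟩ := h2 s hs
    exact ⟨⟨x, hx⟩, Subtype.ext (by simpa [f] using hxs)⟩
  exact (Submodule.quotEquivOfEq _ _ hker).trans (f.quotKerEquivOfSurjective hsurj)

theorem main_exists (E : Type) [AddCommGroup E] [Module A E] [IsNoetherian A E]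
    (Y : Submodule A E) (hss : IsSemisimpleModule A ↥Y) (hns : ¬ Retr A E Y) :
    ∃ W : Submodule A E, W ≤ Y ∧ IsSimpleModule A ↥(Y.map W.mkQ) ∧
      ¬ Retr A (E ⧸ W) (Y.map W.mkQ) := by
  set 𝒮 : Set (Submodule A E) := {W | W ≤ Y ∧ ¬ Retr A (E ⧸ W) (Y.map W.mkQ)} with h𝒮
  have hbot : (⊥ : Submodule A E) ∈ 𝒮 := by
    refine ⟨bot_le, fun hc => hns ?_⟩
    refine retr_transfer ((Submodule.quotEquivOfEqBot (⊥ : Submodule A E) rfl).symm) ?_ hc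
    rw [Submodule.coe_quotEquivOfEqBot_symm]
  obtain ⟨W, hW, hmax⟩ := set_has_maximal_iff_noetherian.mpr ‹_› 𝒮 ⟨⊥, hbot⟩
  obtain ⟨hWY, hWns⟩ := hW
  set Yb : Submodule A (E ⧸ W) := Y.map W.mkQ with hYb
  -- transport lemma
  have key : ∀ V : Submodule A (E ⧸ W), V ≠ ⊥ → V ≤ Yb →
      Retr A ((E ⧸ W) ⧸ V) (Yb.map V.mkQ) := by
    intro V hVne hVle
    set W' := Submodule.comap W.mkQ V with hW'
    have hWW' : W ≤ W' := by
      intro x hx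
      show W.mkQ x ∈ V
      have : W.mkQ x = 0 := by simpa [Submodule.mkQ_apply, Submodule.Quotient.mk_eq_zero] using hx
      rw [this]; exact zero_mem V
    have hVeq : W'.map W.mkQ = V := by
      rw [hW', Submodule.map_comap_eq, Submodule.range_mkQ, top_inf_eq]
    have hW'Y : W' ≤ Y := by
      intro x hx
      have : W.mkQ x ∈ Yb := hVle hx
      obtain ⟨y, hy, hyx⟩ := this
      have : x - y ∈ W := by
        rw [← Submodule.Quotient.eq W]
        have := hyx.symm
        simpa [Submodule.mkQ_apply] using this
      have := add_mem (hWY this) hy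
      simpa using this
    have hlt : W < W' := by
      refine lt_of_le_of_ne hWW' ?_
      intro heq
      apply hVne
      rw [← hVeq, ← heq, eq_bot_iff]
      rintro z ⟨x, hx, rfl⟩
      simpa [Submodule.mkQ_apply, Submodule.Quotient.mk_eq_zero] using hx
    have hW'not : W' ∉ 𝒮 := fun hc => hmax W' hc hlt
    have hretr : Retr A (E ⧸ W') (Y.map W'.mkQ) := by
      by_contra hr
      exact hW'not ⟨hW'Y, hr⟩
    set e : ((E ⧸ W) ⧸ V) ≃ₗ[A] (E ⧸ W') :=
      (Submodule.quotEquivOfEq V (W'.map W.mkQ) hVeq.symm).trans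
        (Submodule.quotientQuotientEquivQuotient W W' hWW') with he
    have hcomp : ((e : ((E ⧸ W) ⧸ V) →ₗ[A] (E ⧸ W')).comp (V.mkQ)).comp W.mkQ = W'.mkQ := by
      ext x
      simp [e, Submodule.quotientQuotientEquivQuotient, Submodule.mkQ_apply,
        Submodule.quotEquivOfEq_mk]
    refine retr_transfer e ?_ hretr
    rw [hYb, ← Submodule.map_comp, ← Submodule.map_comp, hcomp]
  -- Yb is an atom
  have hYne : Yb ≠ ⊥ := fun h => hWns (retr_of_bot h)
  haveI : IsSemisimpleModule A ↥Y := hss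
  have hrange : Yb = LinearMap.range ((W.mkQ).comp Y.subtype) := by
    rw [LinearMap.range_comp, Submodule.range_subtype]
  haveI hssYb : IsSemisimpleModule A ↥Yb := by
    rw [hrange]; exact IsSemisimpleModule.range _
  have hatom : IsAtom Yb := by
    refine ⟨hYne, fun B hBlt => ?_⟩
    by_contra hBne
    obtain ⟨c, hc⟩ := exists_isCompl (Submodule.comap Yb.subtype B)
    set B' := c.map Yb.subtype with hB'
    have hmapB : Submodule.map Yb.subtype (Submodule.comap Yb.subtype B) = B := by
      rw [Submodule.map_comap_subtype, inf_eq_right.mpr hBlt.le]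
    have hinj : Function.Injective Yb.subtype := Subtype.val_injective
    have hBB' : B ⊓ B' = ⊥ := by
      rw [hB', ← hmapB, ← Submodule.map_inf _ hinj, disjoint_iff.mp hc.1,
        Submodule.map_bot]
    have hsupB : B ⊔ B' = Yb := by
      rw [hB', ← hmapB, ← Submodule.map_sup, codisjoint_iff.mp hc.2, Submodule.map_top,
        Submodule.range_subtype]
    have hB'ne : B' ≠ ⊥ := by
      intro h0
      rw [h0, sup_bot_eq] at hsupB
      exact hBlt.ne hsupB
    have hBle : B ≤ Yb := hBlt.le
    have hB'le : B' ≤ Yb := by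
      rw [hB']
      intro z hz
      obtain ⟨y, _, rfl⟩ := hz
      exact y.2
    exact hWns (retr_combine hBle hB'le hBB' hsupB (key B hBne hBle) (key B' hB'ne hB'le))
  exact ⟨W, hWY, isSimpleModule_iff_isAtom.mpr hatom, hWns⟩


section ExtLemma

theorem ext_nontrivial (F : Type) [Field F] (A : Type) [Ring A] [Algebra F A]
    (T : Type) [AddCommGroup T] [Module A T]
    (E : Type) [AddCommGroup E] [Module A E] (Y : Submodule A E)
    (e : (E ⧸ Y) ≃ₗ[A] T) (hns : ¬ Retr A E Y) :
    Nontrivial (((Ext F (ModuleCat A) 1).obj (Opposite.op (ModuleCat.of A T))).obj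
      (ModuleCat.of A ↥Y)) := by
  classical
  set X : ModuleCat A := ModuleCat.of A T with hX
  set Ymod : ModuleCat A := ModuleCat.of A ↥Y with hYmod
  let P : ProjectiveResolution X := (HasProjectiveResolution.out (Z := X)).some
  set K := P.complex.linearYonedaObj F Ymod with hK
  -- the data
  let pLM : E →ₗ[A] T := (e : (E ⧸ Y) →ₗ[A] T).comp Y.mkQ
  let Emod : ModuleCat A := ModuleCat.of A E
  let pc : Emod ⟶ X := ModuleCat.ofHom pLM
  haveI hpc_epi : Epi pc := (ModuleCat.epi_iff_surjective _).mpr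
    (e.surjective.comp (Submodule.mkQ_surjective Y))
  let π : P.complex.X 0 ⟶ X := P.π.f 0
  let σ : P.complex.X 0 ⟶ Emod := Projective.factorThru π pc
  have hσ : σ ≫ pc = π := Projective.factorThru_comp _ _
  let d10 : P.complex.X 1 ⟶ P.complex.X 0 := P.complex.d 1 0
  let d21 : P.complex.X 2 ⟶ P.complex.X 1 := P.complex.d 2 1
  have hd0 : d10 ≫ π = 0 := P.complex_d_comp_π_f_zero
  -- linear map versions
  let σLM : (P.complex.X 0 : Type) →ₗ[A] E := σ.hom
  let πLM : (P.complex.X 0 : Type) →ₗ[A] T := π.hom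
  let d10LM : (P.complex.X 1 : Type) →ₗ[A] (P.complex.X 0 : Type) := d10.hom
  have hpY : ∀ x : E, pLM x = 0 ↔ x ∈ Y := by
    intro x
    rw [LinearMap.comp_apply]
    constructor
    · intro h
      have : Y.mkQ x = 0 := e.injective (by simpa using h)
      simpa [Submodule.mkQ_apply, Submodule.Quotient.mk_eq_zero] using this
    · intro h
      have : Y.mkQ x = 0 := by
        simpa [Submodule.mkQ_apply, Submodule.Quotient.mk_eq_zero] using h
      rw [show (e : (E ⧸ Y) →ₗ[A] T) (Y.mkQ x) = e (Y.mkQ x) from rfl, this, map_zero]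
  have hmem : ∀ z : (P.complex.X 1 : Type), σLM (d10LM z) ∈ Y := by
    intro z
    have h1 : pLM (σLM (d10LM z)) = πLM (d10LM z) := by
      have := congrArg (fun f => ModuleCat.Hom.hom f (d10LM z)) hσ
      simp only [ModuleCat.hom_comp, LinearMap.comp_apply] at this; exact this
    have h2 : πLM (d10LM z) = 0 := by
      have := congrArg (fun f => ModuleCat.Hom.hom f z) hd0
      simpa using this
    exact (hpY _).mp (h1.trans h2)
  let φLM : (P.complex.X 1 : Type) →ₗ[A] (↥Y) :=
    LinearMap.codRestrict Y (σLM.comp d10LM) hmem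
  let φ : P.complex.X 1 ⟶ Ymod := ModuleCat.ofHom φLM
  -- φ is a cycle
  have hcycle : (K.d 1 2) φ = 0 := by
    have hmor : d21 ≫ φ = (0 : P.complex.X 2 ⟶ Ymod) := by
      refine ModuleCat.hom_ext (LinearMap.ext fun z => ?_)
      have hzero : d10LM (d21 z) = 0 := by
        have h := congrArg (fun f => ModuleCat.Hom.hom f z) (P.complex.d_comp_d 2 1 0)
        simp only [ModuleCat.hom_comp, ModuleCat.hom_zero, LinearMap.comp_apply, LinearMap.zero_apply] at h
        exact h
      apply Subtype.ext
      show σLM (d10LM (d21 z)) = 0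
      rw [hzero, map_zero]
    show (P.complex.d 2 1 ≫ φ : P.complex.X 2 ⟶ Ymod) = 0
    exact hmor
  -- φ is not a boundary
  have hnb : ∀ ψ : P.complex.X 0 ⟶ Ymod, K.d 0 1 ψ ≠ φ := by
    intro ψ hψ
    apply hns
    have hψ' : d10 ≫ ψ = φ := hψ
    -- construct a retraction
    let ψLM : (P.complex.X 0 : Type) →ₗ[A] ↥Y := ψ.hom
    let τ : (P.complex.X 0 : Type) →ₗ[A] E := σLM - Y.subtype.comp ψLM
    have hτd : ∀ z : (P.complex.X 1 : Type), τ (d10LM z) = 0 := by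
      intro z
      have h1 : ψLM (d10LM z) = φLM z := by
        have := congrArg (fun f => ModuleCat.Hom.hom f z) hψ'
        simp only [ModuleCat.hom_comp, LinearMap.comp_apply] at this; exact this
      show σLM (d10LM z) - Y.subtype (ψLM (d10LM z)) = 0
      rw [h1]
      show σLM (d10LM z) - (φLM z : E) = 0
      simp [φLM, LinearMap.codRestrict_apply, sub_eq_zero]
    have hexact : LinearMap.range d10LM = LinearMap.ker πLM :=
      P.exact₀.moduleCat_range_eq_ker
    have hπsurj : Function.Surjective πLM :=
      (ModuleCat.epi_iff_surjective π).mp (inferInstanceAs (Epi (P.π.f 0)))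
    have hkerle : LinearMap.ker πLM ≤ LinearMap.ker τ := by
      intro x hx
      rw [← hexact] at hx
      obtain ⟨z, rfl⟩ := hx
      exact hτd z
    let sLM : T →ₗ[A] E :=
      ((LinearMap.ker πLM).liftQ τ hkerle).comp
        (LinearMap.quotKerEquivOfSurjective πLM hπsurj).symm.toLinearMap
    have hs : ∀ z : (P.complex.X 0 : Type), sLM (πLM z) = τ z := by
      intro z
      have hq : (LinearMap.quotKerEquivOfSurjective πLM hπsurj).symm (πLM z) =
          Submodule.Quotient.mk z := by
        rw [LinearEquiv.symm_apply_eq]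
        simp [LinearMap.quotKerEquivOfSurjective, LinearMap.quotKerEquivRange,
          LinearMap.quotKerEquivRange_apply_mk]
      show ((LinearMap.ker πLM).liftQ τ hkerle)
        ((LinearMap.quotKerEquivOfSurjective πLM hπsurj).symm (πLM z)) = τ z
      rw [hq]
      simp [Submodule.liftQ_apply]
    have hps : ∀ t : T, pLM (sLM t) = t := by
      intro t
      obtain ⟨z, rfl⟩ := hπsurj t
      rw [hs z]
      show pLM (σLM z - Y.subtype (ψLM z)) = πLM z
      rw [map_sub]
      have h1 : pLM (σLM z) = πLM z := by
        have := congrArg (fun f => ModuleCat.Hom.hom f z) hσ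
        simp only [ModuleCat.hom_comp, LinearMap.comp_apply] at this; exact this
      have h2 : pLM (Y.subtype (ψLM z)) = 0 := (hpY _).mpr (ψLM z).2
      rw [h1, h2, sub_zero]
    let rLM : E →ₗ[A] E := LinearMap.id - sLM.comp pLM
    have hrmem : ∀ x : E, rLM x ∈ Y := by
      intro x
      apply (hpY _).mp
      show pLM (x - sLM (pLM x)) = 0
      rw [map_sub, hps, sub_self]
    refine ⟨LinearMap.codRestrict Y rLM hrmem, fun y => ?_⟩
    apply Subtype.ext
    show (y : E) - sLM (pLM (y : E)) = (y : E)
    have : pLM (y : E) = 0 := (hpY _).mpr y.2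
    rw [this, map_zero, sub_zero]
  -- conclude via the homology computation
  have hnexact : ¬ K.ExactAt 1 := by
    intro hex
    rw [K.exactAt_iff' 0 1 2 (by simp) (by simp)] at hex
    rw [ShortComplex.moduleCat_exact_iff] at hex
    obtain ⟨ψ, hψ⟩ := hex φ hcycle
    exact hnb ψ hψ
  have hnz : ¬ Limits.IsZero (K.homology 1) := fun h =>
    hnexact ((K.exactAt_iff_isZero_homology 1).mpr h)
  have hnt : Nontrivial (K.homology 1) := by
    rw [← not_subsingleton_iff_nontrivial]
    intro hsub
    exact hnz (ModuleCat.isZero_of_subsingleton _)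
  exact Equiv.nontrivial (P.isoExt (R := F) 1 Ymod).toLinearEquiv.toEquiv

end ExtLemma

end Stmt0Aux

theorem stmt0' (F : Type) [Field F] [IsAlgClosed F]
    (A : Type) [Ring A] [Algebra F A] [FiniteDimensional F A]
    (M : Type) [AddCommGroup M] [Module A M] [Module.Finite A M]
    (hindec : Nontrivial M ∧ ∀ X Y : Submodule A M, IsCompl X Y → X = ⊥ ∨ Y = ⊥)
    (hrad2 : sInf {N : Submodule A ↥(sInf {N : Submodule A M | IsCoatom N}) | IsCoatom N} = ⊥)
    (hrad : sInf {N : Submodule A M | IsCoatom N} ≠ ⊥)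
    (T : Type) [AddCommGroup T] [Module A T]
    (hTsimple : IsSimpleModule A T)
    (Nbar Nbar' : Submodule A (M ⧸ sInf {N : Submodule A M | IsCoatom N}))
    (hle : Nbar' ≤ Nbar)
    (eiso : (↥Nbar ⧸ (Submodule.comap Nbar.subtype Nbar')) ≃ₗ[A] T) :
    ∃ (T' : Type) (_ : AddCommGroup T') (_ : Module A T'),
      (IsSimpleModule A T' ∧
        ∃ N N' : Submodule A ↥(sInf {N : Submodule A M | IsCoatom N}), N' ≤ N ∧
          Nonempty ((↥N ⧸ (Submodule.comap N.subtype N')) ≃ₗ[A] T')) ∧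
      Nontrivial (((Ext F (ModuleCat A) 1).obj (Opposite.op (ModuleCat.of A T))).obj
        (ModuleCat.of A T')) := by
  classical
  let R : Submodule A M := sInf {N : Submodule A M | IsCoatom N}
  -- finiteness instances
  letI : Module F M := Module.compHom M (algebraMap F A)
  haveI : IsScalarTower F A M := ⟨fun f a m => by
    show (f • a) • m = algebraMap F A f • (a • m)
    rw [Algebra.smul_def, mul_smul]⟩
  haveI : Module.Finite F M := Module.Finite.trans A M
  haveI : IsNoetherian F M := by infer_instance
  haveI : IsArtinian F M := by infer_instance
  haveI : IsNoetherian A M := isNoetherian_of_tower F ‹_›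
  haveI : IsArtinian A M := isArtinian_of_tower F ‹_›
  haveI hssR : IsSemisimpleModule A ↥R := Stmt0Aux.semisimple_of_rad_bot _ hrad2
  haveI hssQ : IsSemisimpleModule A (M ⧸ R) := Stmt0Aux.semisimple_of_rad_bot _
    (Stmt0Aux.rad_quot_bot M)
  haveI : IsSimpleModule A T := hTsimple
  -- find a simple submodule S of M ⧸ R isomorphic to T
  set Nc : Submodule A ↥Nbar := Submodule.comap Nbar.subtype Nbar' with hNc
  obtain ⟨c, hc⟩ := exists_isCompl Nc
  set S : Submodule A (M ⧸ R) := c.map Nbar.subtype with hSdef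
  let isoST : ↥S ≃ₗ[A] T :=
    ((Submodule.equivSubtypeMap Nbar c).symm.trans
      ((Submodule.quotientEquivOfIsCompl Nc c hc).symm.trans eiso))
  haveI : IsSimpleModule A ↥S := IsSimpleModule.congr isoST
  obtain ⟨Cb, hCb⟩ := exists_isCompl S
  let isoQT : ((M ⧸ R) ⧸ Cb) ≃ₗ[A] T :=
    (Submodule.quotientEquivOfIsCompl Cb S hCb.symm).trans isoST
  set N : Submodule A M := Submodule.comap R.mkQ Cb with hNdef
  set D : Submodule A M := Submodule.comap R.mkQ S with hDdef
  have hmk0 : ∀ x ∈ R, R.mkQ x = 0 := by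
    intro x hx
    simpa [Submodule.mkQ_apply, Submodule.Quotient.mk_eq_zero] using hx
  have hRN : R ≤ N := by
    intro x hx
    show R.mkQ x ∈ Cb
    rw [hmk0 x hx]; exact zero_mem _
  have hRD : R ≤ D := by
    intro x hx
    show R.mkQ x ∈ S
    rw [hmk0 x hx]; exact zero_mem _
  have hDN_inf : D ⊓ N = R := by
    have h1 : D ⊓ N = Submodule.comap R.mkQ (S ⊓ Cb) := by
      rw [Submodule.comap_inf]
    rw [h1, disjoint_iff.mp hCb.1, Submodule.comap_bot, Submodule.ker_mkQ]
  have hDN_sup : D ⊔ N = ⊤ := by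
    rw [eq_top_iff]
    intro x _
    have hx : R.mkQ x ∈ S ⊔ Cb := by
      rw [codisjoint_iff.mp hCb.2]; trivial
    obtain ⟨s, hs, cb, hcb, hscb⟩ := Submodule.mem_sup.mp hx
    obtain ⟨xs, hxs⟩ := Submodule.mkQ_surjective R s
    obtain ⟨xc, hxc⟩ := Submodule.mkQ_surjective R cb
    have hrem : x - xs - xc ∈ R := by
      have h0 : R.mkQ (x - xs - xc) = 0 := by
        rw [map_sub, map_sub, hxs, hxc, ← hscb]; abel
      rw [Submodule.mkQ_apply, Submodule.Quotient.mk_eq_zero] at h0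
      exact h0
    refine Submodule.mem_sup.mpr ⟨xs, ?_, xc + (x - xs - xc), ?_, by abel⟩
    · show R.mkQ xs ∈ S
      rw [hxs]; exact hs
    · refine add_mem ?_ (hRN hrem)
      show R.mkQ xc ∈ Cb
      rw [hxc]; exact hcb
  set Rhat : Submodule A ↥D := Submodule.comap D.subtype R with hRhat
  -- the quotient iso D ⧸ Rhat ≃ T
  let h1iso : (↥D ⧸ Rhat) ≃ₗ[A] T :=
    (Stmt0Aux.subquotEquiv R.mkQ D S R (fun x hx => hx)
      (fun s hs => by
        obtain ⟨x, hx⟩ := Submodule.mkQ_surjective R s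
        exact ⟨x, by show R.mkQ x ∈ S; rw [hx]; exact hs, hx⟩)
      (fun x => by
        simp [Submodule.mkQ_apply, Submodule.Quotient.mk_eq_zero])).trans isoST
  -- non-splitness
  haveI : Nontrivial T := by
    obtain ⟨x, y, hxy⟩ := (IsSimpleModule.nontrivial A T).exists_pair_ne
    exact ⟨x, y, hxy⟩
  have hns : ¬ Stmt0Aux.Retr A ↥D Rhat := by
    rintro ⟨r, hr⟩
    set S0 : Submodule A ↥D := LinearMap.ker r with hS0def
    have hS0inf : S0 ⊓ Rhat = ⊥ := by
      rw [eq_bot_iff]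
      rintro x ⟨hx1, hx2⟩
      have h0 : r x = 0 := hx1
      have h2 : r x = ⟨x, hx2⟩ := hr ⟨x, hx2⟩
      have : (⟨x, hx2⟩ : ↥Rhat) = 0 := by rw [← h2, h0]
      have := congrArg (fun z : ↥Rhat => (z : ↥D)) this
      simpa using this
    have hS0sup : S0 ⊔ Rhat = ⊤ := by
      rw [eq_top_iff]
      intro x _
      have hmemk : x - (r x : ↥D) ∈ S0 := by
        show r (x - (r x : ↥D)) = 0
        rw [map_sub, hr (r x), sub_self]
      exact Submodule.mem_sup.mpr ⟨x - (r x : ↥D), hmemk, (r x : ↥D), (r x).2, by abel⟩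
    set Smap : Submodule A M := S0.map D.subtype with hSmap
    have hcompl : IsCompl Smap N := by
      constructor
      · rw [disjoint_iff, eq_bot_iff]
        rintro x ⟨hx1, hx2⟩
        obtain ⟨x0, hx0, rfl⟩ := hx1
        have hxD : (x0 : M) ∈ D ⊓ N := ⟨x0.2, hx2⟩
        rw [hDN_inf] at hxD
        have : x0 ∈ S0 ⊓ Rhat := ⟨hx0, hxD⟩
        rw [hS0inf] at this
        simpa using congrArg (fun z : ↥D => (z : M)) this
      · rw [codisjoint_iff, eq_top_iff]
        intro x _
        have hx : x ∈ D ⊔ N := by rw [hDN_sup]; trivial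
        obtain ⟨d, hd, n, hn, rfl⟩ := Submodule.mem_sup.mp hx
        have hdt : (⟨d, hd⟩ : ↥D) ∈ S0 ⊔ Rhat := by rw [hS0sup]; trivial
        obtain ⟨s0, hs0, r0, hr0, hsr⟩ := Submodule.mem_sup.mp hdt
        have hds : d = (s0 : M) + (r0 : M) := by
          have := congrArg (fun z : ↥D => (z : M)) hsr
          simpa using this.symm
        refine Submodule.mem_sup.mpr ⟨(s0 : M), ⟨s0, hs0, rfl⟩, (r0 : M) + n, ?_, by
          rw [hds]; abel⟩
        exact add_mem (hRN hr0) hn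
    rcases hindec.2 Smap N hcompl with h | h
    · have hRtop : Rhat = ⊤ := by
        have hS0 : S0 = ⊥ := by
          rw [eq_bot_iff]
          intro x0 hx0
          have : (x0 : M) ∈ Smap := ⟨x0, hx0, rfl⟩
          rw [h] at this
          exact Subtype.ext (by simpa using this)
        rw [hS0] at hS0sup
        simpa using hS0sup
      haveI : Subsingleton (↥D ⧸ Rhat) :=
        Submodule.Quotient.subsingleton_iff.mpr hRtop
      haveI : Nontrivial (↥D ⧸ Rhat) := Equiv.nontrivial h1iso.toEquiv
      exact false_of_nontrivial_of_subsingleton (↥D ⧸ Rhat)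
    · exact hrad (le_bot_iff.mp (h ▸ hRN))
  -- apply the main structural lemma
  haveI hssRhat : IsSemisimpleModule A ↥Rhat :=
    IsSemisimpleModule.congr (Submodule.comapSubtypeEquivOfLe hRD)
  obtain ⟨W, hWR, hsimple, hns2⟩ := Stmt0Aux.main_exists ↥D Rhat hssRhat hns
  set Yf : Submodule A (↥D ⧸ W) := Rhat.map W.mkQ with hYf
  refine ⟨↥Yf, inferInstance, inferInstance, ⟨hsimple, ?_⟩, ?_⟩
  · -- composition factor of ↥R
    set g : ↥Rhat ≃ₗ[A] ↥R := Submodule.comapSubtypeEquivOfLe hRD with hg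
    set What : Submodule A ↥Rhat := Submodule.comap Rhat.subtype W with hWhat
    set N' : Submodule A ↥R := What.map (g : ↥Rhat →ₗ[A] ↥R) with hN'
    let ψf : ↥R →ₗ[A] (↥D ⧸ W) := (W.mkQ.comp Rhat.subtype).comp (g.symm : ↥R →ₗ[A] ↥Rhat)
    have hK : ∀ x : ↥R, ψf x = 0 ↔ x ∈ N' := by
      intro x
      have h0 : ψf x = W.mkQ ((g.symm x : ↥Rhat) : ↥D) := rfl
      rw [h0]
      rw [show (W.mkQ ((g.symm x : ↥Rhat) : ↥D) = 0) ↔ ((g.symm x : ↥Rhat) : ↥D) ∈ W by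
        simp [Submodule.mkQ_apply, Submodule.Quotient.mk_eq_zero]]
      constructor
      · intro hmem
        exact ⟨g.symm x, hmem, by simp⟩
      · rintro ⟨w, hw, hwx⟩
        have : g.symm x = w := by
          rw [← hwx]; simp
        rw [this]
        exact hw
    refine ⟨⊤, N', le_top, ⟨Stmt0Aux.subquotEquiv ψf ⊤ Yf N' ?_ ?_ hK⟩⟩
    · intro x _
      exact ⟨(g.symm x : ↥Rhat), (g.symm x).2, rfl⟩
    · rintro s ⟨y, hy, rfl⟩
      refine ⟨g ⟨y, hy⟩, trivial, ?_⟩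
      show W.mkQ ((g.symm (g ⟨y, hy⟩) : ↥Rhat) : ↥D) = W.mkQ y
      rw [g.symm_apply_apply]
  · -- Ext nonvanishing
    exact Stmt0Aux.ext_nontrivial F A T (↥D ⧸ W) Yf
      ((Submodule.quotientQuotientEquivQuotient W Rhat hWR).trans h1iso) hns2


/-- Let `A` be a finite-dimensional algebra over an algebraically closed
field `F`, and let `M` be an indecomposable `A`-module with `Rad²(M) = 0` and `Rad(M) ≠ 0`.
Then for every simple composition factor `T` of `M/Rad(M)` there exists a composition factor
`T'` of `Rad(M)` such that `Ext¹_A(T, T') ≠ 0`. -/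
theorem stmt0 (F : Type) [Field F] [IsAlgClosed F]
    (A : Type) [Ring A] [Algebra F A] [FiniteDimensional F A]
    (M : Type) [AddCommGroup M] [Module A M] [Module.Finite A M]
    (hindec : IsIndecomposableModule A M)
    (hrad2 : moduleRad A (↥(moduleRad A M)) = ⊥)
    (hrad : moduleRad A M ≠ ⊥)
    (T : Type) [AddCommGroup T] [Module A T]
    (hT : IsCompositionFactor A T (M ⧸ moduleRad A M)) :
    ∃ (T' : Type) (_ : AddCommGroup T') (_ : Module A T'),
      IsCompositionFactor A T' (↥(moduleRad A M)) ∧ ext1NeZero F A T T' := by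
  obtain ⟨hs, Nb, Nb', hle, ⟨eiso⟩⟩ := hT
  exact stmt0' F A M hindec hrad2 hrad T hs Nb Nb' hle eiso

end
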